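/- arXiv:1309.5585 — 2 statements merged into one kernel-verified Lean document; each statement's English description precedes it below -/
import Mathlib

section
/- Let H be a group with a normal subgroup X such that H/X is cyclic of order a, generated by the coset Xf. Let K be an algebraically closed field and let M be a finite-dimensional irreducible KX-module, with representation ρ : X → GL(M), such that for every h ∈ H the h-conjugate module M^h is isomorphic to M as a KX-module. Then ρ extends to a representation ρ : H → GL(M). -/
/-!
Choose an intertwiner `G₀` of `ρ` with its conjugate by `f`. Then `G₀ ^ a * ρ (f ^ a)⁻¹`
commutes with `ρ X`, so by Schur's lemma it is a nonzero scalar; dividing `G₀` by an `a`-th root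
of that scalar gives `W` with `W ρ(x) W⁻¹ = ρ(f x f⁻¹)` and `W ^ a = ρ(f ^ a)`. The first relation
makes `(x, n) ↦ ρ(x) W ^ n` a homomorphism on `X ⋊ ℤ`; the second says that it kills the kernel of
the surjection `X ⋊ ℤ → H`, `(x, n) ↦ x f ^ n`, so it factors through `H`.
-/

section Extension

variable {H G : Type*} [Group H] [Group G] {X : Subgroup H} [X.Normal]

theorem map_conjNormal_zpow (ρ : X →* G) {f : H} {W : G}
    (hW : ∀ x : X, ρ (MulAut.conjNormal f x) = W * ρ x * W⁻¹) (n : ℤ) (x : X) :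
    ρ (MulAut.conjNormal (f ^ n) x) = W ^ n * ρ x * (W ^ n)⁻¹ := by
  induction n using Int.induction_on generalizing x with
  | zero => simp
  | succ n ih => rw [zpow_add_one, map_mul, MulAut.mul_apply, ih, hW, zpow_add_one]; group
  | pred n ih =>
    have hW' : ρ (MulAut.conjNormal f⁻¹ x) = W⁻¹ * ρ x * W := by
      have := hW (MulAut.conjNormal f⁻¹ x)
      rw [← MulAut.mul_apply, ← map_mul, mul_inv_cancel, map_one, MulAut.one_apply] at this
      rw [this]; group
    rw [zpow_sub_one, map_mul, MulAut.mul_apply, ih, hW', zpow_sub_one]; group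

theorem commute_zpow_mul_inv_map (ρ : X →* G) {f : H} {W : G}
    (hW : ∀ x : X, ρ (MulAut.conjNormal f x) = W * ρ x * W⁻¹) {n : ℤ} {y : X}
    (hy : (y : H) = f ^ n) (x : X) : Commute (W ^ n * (ρ y)⁻¹) (ρ x) := by
  have hx : MulAut.conjNormal (f ^ n) (y⁻¹ * x * y) = x :=
    Subtype.ext (by
      simp only [MulAut.conjNormal_apply, Subgroup.coe_mul, Subgroup.coe_inv, hy]; group)
  have h := map_conjNormal_zpow ρ hW n (y⁻¹ * x * y)
  rw [hx, map_mul, map_mul, map_inv] at h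
  rw [commute_iff_eq]
  nth_rewrite 2 [h]
  group

theorem zpow_eq_map_of_pow_orderOf_eq (ρ : X →* G) {f : H} {W : G} {y : X}
    (hy : (y : H) = f ^ orderOf (f : H ⧸ X)) (hW : W ^ orderOf (f : H ⧸ X) = ρ y)
    (n : ℤ) (hn : f ^ n ∈ X) : W ^ n = ρ ⟨f ^ n, hn⟩ := by
  obtain ⟨t, rfl⟩ : (orderOf (f : H ⧸ X) : ℤ) ∣ n := by
    rwa [orderOf_dvd_iff_zpow_eq_one, ← QuotientGroup.mk_zpow, QuotientGroup.eq_one_iff]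
  have hyt : (⟨f ^ (orderOf (f : H ⧸ X) * t : ℤ), hn⟩ : X) = y ^ t :=
    Subtype.ext (by simp [hy, zpow_mul])
  rw [hyt, map_zpow, ← hW, zpow_mul, zpow_natCast]

theorem exists_extension_of_forall_mem_zpowers (ρ : X →* G) {f : H}
    (hf : ∀ q : H ⧸ X, q ∈ Subgroup.zpowers (f : H ⧸ X)) {W : G}
    (hW : ∀ x : X, ρ (MulAut.conjNormal f x) = W * ρ x * W⁻¹)
    (hWpow : ∀ (n : ℤ) (hn : f ^ n ∈ X), W ^ n = ρ ⟨f ^ n, hn⟩) :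
    ∃ ρ' : H →* G, ∀ x : X, ρ' x = ρ x := by
  let φ : Multiplicative ℤ →* MulAut X := MulAut.conjNormal.comp (zpowersHom H f)
  let π : X ⋊[φ] Multiplicative ℤ →* H :=
    SemidirectProduct.lift X.subtype (zpowersHom H f) fun n => by
      ext x
      simp only [φ, MonoidHom.comp_apply, zpowersHom_apply, MulEquiv.coe_toMonoidHom,
        MulAut.conj_apply, MulAut.conjNormal_apply, Subgroup.coe_subtype]
  let ψ : X ⋊[φ] Multiplicative ℤ →* G :=
    SemidirectProduct.lift ρ (zpowersHom G W) fun n => by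
      ext x
      simp only [φ, MonoidHom.comp_apply, zpowersHom_apply, MulEquiv.coe_toMonoidHom,
        MulAut.conj_apply, map_conjNormal_zpow ρ hW]
  have hπ : Function.Surjective π := by
    intro h
    obtain ⟨n, hn⟩ := Subgroup.mem_zpowers_iff.mp (hf h)
    have hmem : h * (f ^ n)⁻¹ ∈ X :=
      Subgroup.Normal.mem_comm inferInstance
        (QuotientGroup.eq.mp (by rw [QuotientGroup.mk_zpow, hn]))
    exact ⟨⟨⟨_, hmem⟩, Multiplicative.ofAdd n⟩, by simp [π]⟩
  have hker : π.ker ≤ ψ.ker := by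
    rintro ⟨x, n⟩ hx
    replace hx : (x : H) * f ^ n.toAdd = 1 := by simpa [π] using hx
    have hfn : f ^ n.toAdd ∈ X := by
      rw [eq_inv_of_mul_eq_one_right hx]; exact inv_mem x.2
    have hxf : x * ⟨_, hfn⟩ = 1 := Subtype.ext hx
    change ρ x * W ^ n.toAdd = 1
    rw [hWpow _ hfn, ← map_mul, hxf, map_one]
  refine ⟨π.liftOfSurjective hπ ⟨ψ, hker⟩, fun x => ?_⟩
  simpa [π, ψ] using π.liftOfRightInverse_comp_apply _ _ ⟨ψ, hker⟩ (SemidirectProduct.inl x)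

end Extension

theorem Module.End.exists_eq_algebraMap_of_forall_commute {K M ι : Type*} [Field K]
    [IsAlgClosed K] [AddCommGroup M] [Module K M] [FiniteDimensional K M] [Nontrivial M]
    (T : ι → Module.End K M)
    (hT : ∀ p : Submodule K M, (∀ i, ∀ v ∈ p, T i v ∈ p) → p = ⊥ ∨ p = ⊤)
    {u : Module.End K M} (hu : ∀ i, Commute u (T i)) : ∃ μ : K, u = algebraMap K _ μ := by
  obtain ⟨μ, hμ⟩ := u.exists_eigenvalue
  have htop : u.eigenspace μ = ⊤ :=
    (hT _ fun i => mapsTo_genEigenspace_of_comm (hu i) μ 1).resolve_left hμ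
  refine ⟨μ, ?_⟩
  rw [eigenspace_def, LinearMap.ker_eq_top, sub_eq_zero] at htop
  rw [htop, Algebra.algebraMap_eq_smul_one]

theorem exists_mem_center_pow_eq_of_val_eq_algebraMap {K A : Type*} [Field K] [IsAlgClosed K]
    [Ring A] [Nontrivial A] [Algebra K A] {u : Aˣ} {μ : K} (hu : (u : A) = algebraMap K A μ)
    {n : ℕ} (hn : 0 < n) : ∃ c ∈ Subgroup.center Aˣ, c ^ n = u := by
  obtain ⟨z, rfl⟩ := IsAlgClosed.exists_pow_nat_eq μ hn
  have hz : z ≠ 0 := by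
    rintro rfl
    exact u.ne_zero (by rw [hu, zero_pow hn.ne', map_zero])
  refine ⟨Units.map (algebraMap K A) (Units.mk0 z hz), ?_, Units.ext (by simp [hu])⟩
  exact Subgroup.mem_center_iff.mpr fun v => Units.ext (Algebra.commutes z (v : A)).symm

/-- If `H/X` is cyclic of order `a` generated by the coset `Xf`, `K` is algebraically
closed, `M` a finite-dimensional irreducible `KX`-module all of whose `H`-conjugates
are isomorphic to `M`, then the representation of `X` on `M` extends to `H`. -/
theorem extend_irreducible_rep_of_cyclic_quotient
    (K : Type*) [Field K] [IsAlgClosed K]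
    (H : Type*) [Group H] (X : Subgroup H) [X.Normal]
    (a : ℕ) (ha : 0 < a) (f : H)
    (hgen : ∀ q : H ⧸ X, q ∈ Subgroup.zpowers (QuotientGroup.mk f : H ⧸ X))
    (horder : Nat.card (H ⧸ X) = a)
    (M : Type*) [AddCommGroup M] [Module K M] [FiniteDimensional K M]
    (ρ : X →* (M →ₗ[K] M)ˣ)
    (hirr : ∀ p : Submodule K M,
      (∀ (x : X), ∀ v ∈ p, (ρ x : M →ₗ[K] M) v ∈ p) → p = ⊥ ∨ p = ⊤)
    (hconj : ∀ h : H, ∃ g : M ≃ₗ[K] M, ∀ (x : X) (hx : h * (x : H) * h⁻¹ ∈ X) (v : M),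
      (ρ ⟨h * (x : H) * h⁻¹, hx⟩ : M →ₗ[K] M) (g v) = g ((ρ x : M →ₗ[K] M) v)) :
    ∃ ρ' : H →* (M →ₗ[K] M)ˣ, ∀ x : X, ρ' (x : H) = ρ x := by
  rcases subsingleton_or_nontrivial M with hM | hM
  · exact ⟨1, fun x => Units.ext (Subsingleton.elim _ _)⟩
  have hord : orderOf (f : H ⧸ X) = a :=
    (orderOf_eq_card_of_forall_mem_zpowers hgen).trans horder
  obtain ⟨g, hg⟩ := hconj f
  set G₀ := (LinearMap.GeneralLinearGroup.generalLinearEquiv K M).symm g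
  have hG₀ : ∀ x : X, ρ (MulAut.conjNormal f x) = G₀ * ρ x * G₀⁻¹ := fun x =>
    eq_mul_inv_of_mul_eq (Units.ext (LinearMap.ext (hg x _)))
  have hfa : f ^ a ∈ X := by
    rw [← hord, ← QuotientGroup.eq_one_iff, QuotientGroup.mk_pow, pow_orderOf_eq_one]
  set y : X := ⟨f ^ a, hfa⟩
  obtain ⟨μ, hμ⟩ := Module.End.exists_eq_algebraMap_of_forall_commute (fun x => (ρ x : M →ₗ[K] M))
    hirr fun x => (commute_zpow_mul_inv_map ρ hG₀ (y := y) (zpow_natCast f a).symm x).units_val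
  obtain ⟨c, hc, hca⟩ := exists_mem_center_pow_eq_of_val_eq_algebraMap hμ ha
  refine exists_extension_of_forall_mem_zpowers ρ hgen (W := c⁻¹ * G₀) (fun x => ?_)
    (zpow_eq_map_of_pow_orderOf_eq ρ (y := y) (by rw [hord]) ?_)
  · rw [hG₀, show c⁻¹ * G₀ * ρ x * (c⁻¹ * G₀)⁻¹ = c⁻¹ * (G₀ * ρ x * G₀⁻¹ * c) by group,
      ← (hc.comm _).eq, inv_mul_cancel_left]
  · rw [hord, (Commute.inv_left (hc.comm G₀)).mul_pow, inv_pow, hca]; group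
end

section
/- Let H = X⟨s⟩ be a group generated by a normal subgroup X together with one element s, let K be an algebraically closed field, and let V be a finite-dimensional KH-module such that the restriction V|_X is isomorphic to a direct sum of n ≥ 2 copies of a single irreducible KX-module V₁, and moreover the s-conjugate module (V₁)^s is isomorphic to V₁. Then V is reducible as a KH-module. -/
-- Schur-type lemma: an endomorphism commuting with an "irreducible" family is a scalar.
theorem aux_schur_scalar
    (K : Type*) [Field K] [IsAlgClosed K]
    (V₁ : Type*) [AddCommGroup V₁] [Module K V₁] [FiniteDimensional K V₁]
    [Nontrivial V₁]
    {X : Type*} (ρ₁ : X → (V₁ →ₗ[K] V₁))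
    (hirr : ∀ p : Submodule K V₁,
      (∀ (x : X), ∀ v ∈ p, (ρ₁ x) v ∈ p) → p = ⊥ ∨ p = ⊤)
    (f : V₁ →ₗ[K] V₁) (hf : ∀ (x : X) (w : V₁), f (ρ₁ x w) = ρ₁ x (f w)) :
    ∃ μ : K, ∀ w : V₁, f w = μ • w := by
  obtain ⟨μ, hμ⟩ := Module.End.exists_eigenvalue f
  refine ⟨μ, ?_⟩
  have hinv : ∀ (x : X), ∀ v ∈ Module.End.eigenspace f μ, (ρ₁ x) v ∈ Module.End.eigenspace f μ := by
    intro x v hv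
    rw [Module.End.mem_eigenspace_iff] at hv ⊢
    rw [hf, hv, map_smul]
  rcases hirr _ hinv with hbot | htop
  · exact absurd hbot hμ
  · intro w
    have : w ∈ Module.End.eigenspace f μ := htop ▸ Submodule.mem_top
    exact Module.End.mem_eigenspace_iff.mp this

/-- If `H = X⟨s⟩`, `K` is algebraically closed, `V` is a finite-dimensional `KH`-module
whose restriction to `X` is a direct sum of `n ≥ 2` copies of a single irreducible
`KX`-module `V₁`, and the `s`-conjugate of `V₁` is isomorphic to `V₁`, then `V` is
reducible as a `KH`-module. -/
theorem reducible_of_homogeneous_restriction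
    (K : Type*) [Field K] [IsAlgClosed K]
    (H : Type*) [Group H] (X : Subgroup H) [X.Normal] (s : H)
    (hgen : Subgroup.closure ((X : Set H) ∪ {s}) = ⊤)
    (V : Type*) [AddCommGroup V] [Module K V] [FiniteDimensional K V]
    (ρ : H →* (V →ₗ[K] V)ˣ)
    (V₁ : Type*) [AddCommGroup V₁] [Module K V₁] [FiniteDimensional K V₁]
    (ρ₁ : X →* (V₁ →ₗ[K] V₁)ˣ)
    (hV₁ne : Nontrivial V₁)
    (hirr : ∀ p : Submodule K V₁,
      (∀ (x : X), ∀ v ∈ p, (ρ₁ x : V₁ →ₗ[K] V₁) v ∈ p) → p = ⊥ ∨ p = ⊤)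
    (n : ℕ) (hn : 2 ≤ n)
    (e : V ≃ₗ[K] (Fin n → V₁))
    (he : ∀ (x : X) (v : V) (i : Fin n),
      e ((ρ (x : H) : V →ₗ[K] V) v) i = (ρ₁ x : V₁ →ₗ[K] V₁) (e v i))
    (g : V₁ ≃ₗ[K] V₁)
    (hg : ∀ (x : X) (hx : s * (x : H) * s⁻¹ ∈ X) (v : V₁),
      g ((ρ₁ x : V₁ →ₗ[K] V₁) v) = (ρ₁ ⟨s * (x : H) * s⁻¹, hx⟩ : V₁ →ₗ[K] V₁) (g v)) :
    ∃ p : Submodule K V, (∀ (h : H), ∀ v ∈ p, (ρ h : V →ₗ[K] V) v ∈ p) ∧ p ≠ ⊥ ∧ p ≠ ⊤ := by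
  classical
  haveI := hV₁ne
  -- the action of s transported to (Fin n → V₁)
  set T : (Fin n → V₁) →ₗ[K] (Fin n → V₁) :=
    e.toLinearMap ∘ₗ (ρ s : V →ₗ[K] V) ∘ₗ e.symm.toLinearMap with hT
  -- "untwisted" operator
  set A : (Fin n → V₁) →ₗ[K] (Fin n → V₁) :=
    (LinearMap.pi (fun i => g.symm.toLinearMap ∘ₗ LinearMap.proj i)) ∘ₗ T with hAdef
  have hAapp : ∀ u i, A u i = g.symm (T u i) := by
    intro u i; rfl
  have hTapp : ∀ (v : V), T (e v) = e ((ρ s : V →ₗ[K] V) v) := by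
    intro v
    simp [hT, LinearMap.comp_apply]
  -- T intertwines the X-action with its s-conjugate
  have hTcomm : ∀ (x : X) (u : Fin n → V₁) (i : Fin n),
      T (fun k => (ρ₁ x : V₁ →ₗ[K] V₁) (u k)) i
        = (ρ₁ ⟨s * (x : H) * s⁻¹, (‹X.Normal›).conj_mem _ x.2 s⟩ : V₁ →ₗ[K] V₁) (T u i) := by
    intro x u i
    have h1 : (fun k => (ρ₁ x : V₁ →ₗ[K] V₁) (u k)) = e ((ρ (x : H) : V →ₗ[K] V) (e.symm u)) := by
      funext k
      rw [he x (e.symm u) k, e.apply_symm_apply]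
    have hy : s * (x : H) * s⁻¹ ∈ X := (‹X.Normal›).conj_mem _ x.2 s
    set y : X := ⟨s * (x : H) * s⁻¹, hy⟩ with hydef
    have h2 : (ρ s : V →ₗ[K] V) ((ρ (x : H) : V →ₗ[K] V) (e.symm u))
        = (ρ (y : H) : V →ₗ[K] V) ((ρ s : V →ₗ[K] V) (e.symm u)) := by
      have : s * (x : H) = (y : H) * s := by
        simp [hydef, mul_assoc]
      calc (ρ s : V →ₗ[K] V) ((ρ (x : H) : V →ₗ[K] V) (e.symm u))
          = (ρ (s * (x : H)) : V →ₗ[K] V) (e.symm u) := by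
            rw [map_mul]; rfl
        _ = (ρ ((y : H) * s) : V →ₗ[K] V) (e.symm u) := by rw [this]
        _ = (ρ (y : H) : V →ₗ[K] V) ((ρ s : V →ₗ[K] V) (e.symm u)) := by
            rw [map_mul]; rfl
    calc T (fun k => (ρ₁ x : V₁ →ₗ[K] V₁) (u k)) i
        = T (e ((ρ (x : H) : V →ₗ[K] V) (e.symm u))) i := by rw [h1]
      _ = e ((ρ s : V →ₗ[K] V) ((ρ (x : H) : V →ₗ[K] V) (e.symm u))) i := by rw [hTapp]
      _ = e ((ρ (y : H) : V →ₗ[K] V) ((ρ s : V →ₗ[K] V) (e.symm u))) i := by rw [h2]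
      _ = (ρ₁ y : V₁ →ₗ[K] V₁) (e ((ρ s : V →ₗ[K] V) (e.symm u)) i) := he y _ i
      _ = (ρ₁ y : V₁ →ₗ[K] V₁) (T u i) := by rw [← hTapp, e.apply_symm_apply]
  -- hence A commutes with the (diagonal) X-action
  have hAcomm : ∀ (x : X) (u : Fin n → V₁) (i : Fin n),
      A (fun k => (ρ₁ x : V₁ →ₗ[K] V₁) (u k)) i = (ρ₁ x : V₁ →ₗ[K] V₁) (A u i) := by
    intro x u i
    have hy : s * (x : H) * s⁻¹ ∈ X := (‹X.Normal›).conj_mem _ x.2 s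
    have hginv : ∀ z : V₁, g.symm ((ρ₁ ⟨s * (x : H) * s⁻¹, hy⟩ : V₁ →ₗ[K] V₁) z)
        = (ρ₁ x : V₁ →ₗ[K] V₁) (g.symm z) := by
      intro z
      have := hg x hy (g.symm z)
      rw [g.apply_symm_apply] at this
      rw [← this, g.symm_apply_apply]
    rw [hAapp, hTcomm x u i, hginv, hAapp]
  -- components of A are scalars (Schur)
  have hcomp : ∀ i j : Fin n, ∃ μ : K, ∀ w : V₁, A (Pi.single j w) i = μ • w := by
    intro i j
    have hsingle : ∀ (x : X) (w : V₁),
        (Pi.single j ((ρ₁ x : V₁ →ₗ[K] V₁) w) : Fin n → V₁)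
          = fun k => (ρ₁ x : V₁ →ₗ[K] V₁) ((Pi.single j w : Fin n → V₁) k) := by
      intro x w
      funext k
      by_cases hk : k = j
      · subst hk; simp
      · simp [Pi.single_eq_of_ne hk]
    exact aux_schur_scalar K V₁ (fun x : X => ((ρ₁ x : V₁ →ₗ[K] V₁))) hirr
      ((LinearMap.proj i) ∘ₗ A ∘ₗ (LinearMap.single K (fun _ : Fin n => V₁) j))
      (by
        intro x w
        simp only [LinearMap.comp_apply, LinearMap.proj_apply, LinearMap.single_apply]
        rw [hsingle x w, hAcomm x _ i])
  choose M hM using hcomp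
  -- eigenvector of the matrix M
  haveI : Nonempty (Fin n) := ⟨⟨0, by omega⟩⟩
  obtain ⟨μ, hμ⟩ := Module.End.exists_eigenvalue (Matrix.toLin' (Matrix.of M))
  obtain ⟨c, hc1, hc2⟩ := hμ.exists_hasEigenvector
  have hc1' : (Matrix.of M).mulVec c = μ • c := by
    have := Module.End.mem_eigenspace_iff.mp hc1
    rwa [Matrix.toLin'_apply] at this
  -- the candidate subspace of (Fin n → V₁)
  set ι : V₁ →ₗ[K] (Fin n → V₁) := LinearMap.pi (fun i => c i • LinearMap.id) with hι
  have hιapp : ∀ w i, ι w i = c i • w := fun w i => rfl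
  set p : Submodule K V := (LinearMap.range ι).comap e.toLinearMap with hp
  have hmemp : ∀ v : V, v ∈ p ↔ ∃ w : V₁, ι w = e v := by
    intro v
    simp [hp, LinearMap.mem_range]
  -- A maps range ι into itself, scaled by μ
  have hAι : ∀ w : V₁, A (ι w) = ι (μ • w) := by
    intro w
    funext i
    have hsum : ι w = ∑ j : Fin n, (Pi.single j (c j • w) : Fin n → V₁) := by
      rw [Finset.univ_sum_single (fun j => c j • w)]
      funext k
      rw [hιapp]
    have h4 : A (ι w) i = ∑ j : Fin n, c j • (M i j • w) := by
      rw [hsum, map_sum, Finset.sum_apply]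
      refine Finset.sum_congr rfl (fun j _ => ?_)
      have h5 : (Pi.single j (c j • w) : Fin n → V₁) = c j • (Pi.single j w : Fin n → V₁) := by
        rw [Pi.single_smul]
      rw [h5, map_smul, Pi.smul_apply, hM i j w]
    rw [h4]
    have h6 : ∑ j : Fin n, c j • (M i j • w) = ((Matrix.of M).mulVec c i) • w := by
      rw [Matrix.mulVec, dotProduct, Finset.sum_smul]
      refine Finset.sum_congr rfl (fun j _ => ?_)
      rw [smul_smul]
      rw [mul_comm]
      rfl
    rw [h6, hc1']
    rw [hιapp]
    simp [smul_smul, mul_comm]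
  -- T maps range ι into itself
  have hTι : ∀ w : V₁, T (ι w) = ι (μ • g w) := by
    intro w
    funext i
    have h1 : g.symm (T (ι w) i) = ι (μ • w) i := by rw [← hAapp, hAι]
    have := congrArg g h1
    rw [g.apply_symm_apply] at this
    rw [this, hιapp, hιapp, map_smul, map_smul]
  -- stability lemma for units
  have hunit : ∀ u : (V →ₗ[K] V)ˣ, Submodule.map (u : V →ₗ[K] V) p ≤ p →
      Submodule.map (u : V →ₗ[K] V) p = p := by
    intro u hu
    set eu : V ≃ₗ[K] V := LinearEquiv.ofLinear (u : V →ₗ[K] V) ((u⁻¹ : (V →ₗ[K] V)ˣ) : V →ₗ[K] V)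
      (by ext v; exact congrFun (congrArg DFunLike.coe (u.mul_inv)) v)
      (by ext v; exact congrFun (congrArg DFunLike.coe (u.inv_mul)) v) with heu
    have : Submodule.map (eu : V →ₗ[K] V) p = Submodule.map (u : V →ₗ[K] V) p := rfl
    refine Submodule.eq_of_le_of_finrank_le hu ?_
    rw [← this, LinearEquiv.finrank_map_eq]
  -- generators stabilize p
  have hxstab : ∀ x : X, ∀ v ∈ p, (ρ (x : H) : V →ₗ[K] V) v ∈ p := by
    intro x v hv
    obtain ⟨w, hw⟩ := (hmemp v).mp hv
    refine (hmemp _).mpr ⟨(ρ₁ x : V₁ →ₗ[K] V₁) w, ?_⟩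
    funext i
    rw [he x v i, ← hw, hιapp, hιapp, map_smul]
  have hsstab : ∀ v ∈ p, (ρ s : V →ₗ[K] V) v ∈ p := by
    intro v hv
    obtain ⟨w, hw⟩ := (hmemp v).mp hv
    refine (hmemp _).mpr ⟨μ • g w, ?_⟩
    rw [← hTι, hw, hTapp]
  -- all of H stabilizes p
  have hstab : ∀ h : H, Submodule.map ((ρ h : (V →ₗ[K] V)ˣ) : V →ₗ[K] V) p = p := by
    intro h
    have hmem : h ∈ Subgroup.closure ((X : Set H) ∪ {s}) := by rw [hgen]; trivial
    induction hmem using Subgroup.closure_induction with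
    | mem z hz =>
      rcases hz with hz | hz
      · apply hunit
        rintro _ ⟨v, hv, rfl⟩
        exact hxstab ⟨z, hz⟩ v hv
      · apply hunit
        rintro _ ⟨v, hv, rfl⟩
        rw [Set.mem_singleton_iff] at hz
        subst hz
        exact hsstab v hv
    | one =>
      rw [map_one]
      exact Submodule.map_id p
    | mul a b _ _ ha hb =>
      rw [map_mul, Units.val_mul, Module.End.mul_eq_comp, Submodule.map_comp, hb, ha]
    | inv a _ ha =>
      conv_lhs => rw [← ha]
      rw [← Submodule.map_comp, ← Module.End.mul_eq_comp, ← Units.val_mul, ← map_mul,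
        inv_mul_cancel, map_one, Units.val_one, Module.End.one_eq_id]
      exact Submodule.map_id p
  -- nontriviality of p
  obtain ⟨i₀, hi₀⟩ : ∃ i, c i ≠ 0 := by
    by_contra hcon
    push_neg at hcon
    exact hc2 (funext hcon)
  obtain ⟨w₀, hw₀⟩ := exists_ne (0 : V₁)
  have hpne_bot : p ≠ ⊥ := by
    intro hbot
    have hmem : e.symm (ι w₀) ∈ p := (hmemp _).mpr ⟨w₀, by rw [e.apply_symm_apply]⟩
    rw [hbot, Submodule.mem_bot] at hmem
    have : ι w₀ = 0 := by
      rw [← e.apply_symm_apply (ι w₀), hmem, map_zero]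
    have : c i₀ • w₀ = 0 := by rw [← hιapp, this]; rfl
    rcases smul_eq_zero.mp this with h | h
    · exact hi₀ h
    · exact hw₀ h
  have hpne_top : p ≠ ⊤ := by
    intro htop
    have hrange : LinearMap.range ι = ⊤ := by
      rw [eq_top_iff]
      intro u _
      have : e.symm u ∈ p := htop ▸ Submodule.mem_top
      obtain ⟨w, hw⟩ := (hmemp _).mp this
      rw [e.apply_symm_apply] at hw
      exact ⟨w, hw⟩
    have h1 : Module.finrank K (Fin n → V₁) ≤ Module.finrank K V₁ := by
      calc Module.finrank K (Fin n → V₁)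
          = Module.finrank K (⊤ : Submodule K (Fin n → V₁)) := (finrank_top K _).symm
        _ = Module.finrank K (LinearMap.range ι) := by rw [hrange]
        _ ≤ Module.finrank K V₁ := LinearMap.finrank_range_le ι
    have h2 : Module.finrank K (Fin n → V₁) = n * Module.finrank K V₁ := by
      rw [Module.finrank_pi_fintype K]
      simp [Finset.sum_const, Finset.card_univ]
    have h3 : 0 < Module.finrank K V₁ := Module.finrank_pos
    have h4 : 2 * Module.finrank K V₁ ≤ n * Module.finrank K V₁ :=
      Nat.mul_le_mul_right _ hn
    omega
  refine ⟨p, ?_, hpne_bot, hpne_top⟩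
  intro h v hv
  have := hstab h
  rw [← this]
  exact Submodule.mem_map_of_mem hv
end
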